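/- For ε ∈ (0,1/2) and Δ > Δ_min, the closed-form expression holds: kl^ε_G(x, x+Δ) = (1-ε)·[(1-c)·Φ(Δ₋/2)·log(1/c) + (Δ²/2)·(Φ(Δ₊/2) - Φ(Δ₋/2)) - Δ·(φ(Δ₋/2) - φ(Δ₊/2))], where c is the unique solution of 1/(1-ε) = c·Φ(Δ₋/2) + Φ(Δ₊/2) with Δ₊ = Δ + (2/Δ)log(1/c) and Δ₋ = Δ - (2/Δ)log(1/c). -/

import Mathlib

open MeasureTheory ProbabilityTheory Real Set
open scoped ENNReal

noncomputable section

/-- Standard normal probability density function. -/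
def stdphi (x : ℝ) : ℝ := (Real.sqrt (2 * Real.pi))⁻¹ * Real.exp (-x ^ 2 / 2)

/-- Standard normal cumulative distribution function. -/
def stdPhi (x : ℝ) : ℝ := ((gaussianReal 0 1) (Set.Iic x)).toReal

/-- Standard normal quantile function. -/
def stdPhiInv (p : ℝ) : ℝ := sInf {x : ℝ | p ≤ stdPhi x}

/-- Minimum distinction gap under corruption, `Δ_min = 2 Φ⁻¹(1/(2(1-ε)))`. -/
def Dmin (ε : ℝ) : ℝ := 2 * stdPhiInv (1 / (2 * (1 - ε)))

/-- `ε`-corrupted mixture `(1-ε) μ + ε H` of two measures on `ℝ`. -/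
def mix (ε : ℝ) (μ H : Measure ℝ) : Measure ℝ :=
  ENNReal.ofReal (1 - ε) • μ + ENNReal.ofReal ε • H

open Classical in
/-- Kullback–Leibler divergence. -/
def KLdiv (P Q : Measure ℝ) : ℝ≥0∞ :=
  if P ≪ Q ∧ Integrable (fun x => Real.log (P.rnDeriv Q x).toReal) P then
    ENNReal.ofReal (∫ x, Real.log (P.rnDeriv Q x).toReal ∂P) else ⊤

/-- Corrupted Gaussian divergence `kl^ε_G(x, y)`: the infimum over pairs of corruption
distributions of the KL divergence between the corrupted unit-variance Gaussians. -/
def klG (ε x y : ℝ) : ℝ≥0∞ :=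
  ⨅ (H : Measure ℝ) (_ : IsProbabilityMeasure H) (H' : Measure ℝ)
    (_ : IsProbabilityMeasure H'),
    KLdiv (mix ε (gaussianReal x 1) H) (mix ε (gaussianReal y 1) H')

/-- (Lower) median of a probability measure on `ℝ`. -/
def measMed (μ : Measure ℝ) : ℝ := sInf {x : ℝ | 1 / 2 ≤ (μ (Set.Iic x)).toReal}

/-- Quantile function of a probability measure on `ℝ`. -/
def quantile (μ : Measure ℝ) (p : ℝ) : ℝ := sInf {x : ℝ | p ≤ (μ (Set.Iic x)).toReal}

/-- Empirical median of a finite sample. -/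
def empMed {n : ℕ} (X : Fin n → ℝ) : ℝ :=
  sInf {x : ℝ | (n : ℝ) ≤ 2 * Nat.card {i : Fin n // X i ≤ x}}

/-- The variance proxy `s_ε` for the concentration of the median under corruption. -/
def sEps (ε : ℝ) : ℝ :=
  (Real.sqrt (ε / 2 / Real.log (1 / (1 - 2 * ε))) +
      Real.sqrt ((1 - 2 * ε) / (4 * Real.log ((1 - ε) / ε)))) /
    ((1 - ε) * stdphi (Dmin ε / 2 + 1))

/-- Mean of a measure on `ℝ`. -/
def meanOf (μ : Measure ℝ) : ℝ := ∫ x, x ∂μ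

/-- Corrupted KL-inf `KL^ε_inf(η, x; L)`. -/
def KLinf (ε : ℝ) (η : Measure ℝ) (x : ℝ) (L : Set (Measure ℝ)) : ℝ≥0∞ :=
  ⨅ (κ : Measure ℝ) (_ : κ ∈ L) (_ : x ≤ meanOf κ) (H : Measure ℝ)
    (_ : IsProbabilityMeasure H) (H' : Measure ℝ) (_ : IsProbabilityMeasure H'),
    KLdiv (mix ε η H) (mix ε κ H')



/- ### auxiliary lemmas ### -/

lemma stdphi_eq : gaussianPDFReal 0 1 = stdphi := by
  ext t; simp [stdphi, gaussianPDFReal]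

lemma stdphi_pos (t : ℝ) : 0 < stdphi t := by
  rw [← stdphi_eq]; exact gaussianPDFReal_pos _ _ _ one_ne_zero

lemma stdphi_even (t : ℝ) : stdphi (-t) = stdphi t := by simp [stdphi]

lemma integrable_stdphi : Integrable stdphi := by
  rw [← stdphi_eq]; exact integrable_gaussianPDFReal 0 1

lemma continuous_stdphi : Continuous stdphi := by
  unfold stdphi; fun_prop

lemma stdPhi_eq_integral (s : ℝ) : stdPhi s = ∫ t in Iic s, gaussianPDFReal 0 1 t := by
  rw [stdPhi, gaussianReal_apply_eq_integral _ one_ne_zero,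
    ENNReal.toReal_ofReal (integral_nonneg fun t => gaussianPDFReal_nonneg _ _ _)]

lemma integral_Iic_stdphi (s : ℝ) : ∫ t in Iic s, stdphi t = stdPhi s := by
  rw [stdPhi_eq_integral, stdphi_eq]

lemma integral_stdphi : ∫ t, stdphi t = 1 := by
  rw [← stdphi_eq]; exact integral_gaussianPDFReal_eq_one 0 one_ne_zero

lemma setIntegral_Iic_shift (f : ℝ → ℝ) (μ s : ℝ) :
    ∫ t in Iic s, f (t - μ) = ∫ t in Iic (s - μ), f t := by
  rw [← integral_indicator measurableSet_Iic, ← integral_indicator measurableSet_Iic,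
    ← integral_sub_right_eq_self (fun t => (Iic (s - μ)).indicator f t) μ]
  congr 1; ext t
  by_cases h : t ≤ s
  · rw [indicator_of_mem (mem_Iic.2 h), indicator_of_mem (mem_Iic.2 (by linarith))]
  · rw [indicator_of_notMem (fun hh => h (mem_Iic.1 hh)),
      indicator_of_notMem (fun hh => h (by have := mem_Iic.1 hh; linarith))]

lemma integral_Iic_stdphi_shift (μ s : ℝ) :
    ∫ t in Iic s, stdphi (t - μ) = stdPhi (s - μ) := by
  rw [setIntegral_Iic_shift, integral_Iic_stdphi]

lemma integral_Ioi_stdphi_shift (μ s : ℝ) :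
    ∫ t in Ioi s, stdphi (t - μ) = 1 - stdPhi (s - μ) := by
  have h1 : Integrable (fun t => stdphi (t - μ)) := integrable_stdphi.comp_sub_right μ
  have h2 := intervalIntegral.integral_Iic_add_Ioi (μ := volume) (b := s) h1.integrableOn h1.integrableOn
  have h3 : ∫ t, stdphi (t - μ) = 1 := by
    rw [integral_sub_right_eq_self stdphi μ]; exact integral_stdphi
  rw [integral_Iic_stdphi_shift] at h2
  linarith [h2.trans h3]

lemma integral_Ioc_stdphi_shift (μ : ℝ) {a b : ℝ} (h : a ≤ b) :
    ∫ t in Ioc a b, stdphi (t - μ) = stdPhi (b - μ) - stdPhi (a - μ) := by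
  have h1 : Integrable (fun t => stdphi (t - μ)) := integrable_stdphi.comp_sub_right μ
  have h2 := intervalIntegral.integral_Iic_sub_Iic (μ := volume)
    (f := fun t => stdphi (t - μ)) h1.integrableOn h1.integrableOn (a := a) (b := b)
  rw [intervalIntegral.integral_of_le h, integral_Iic_stdphi_shift, integral_Iic_stdphi_shift] at h2
  exact h2.symm

lemma stdPhi_neg (s : ℝ) : stdPhi (-s) = 1 - stdPhi s := by
  have h0 : ∀ t:ℝ, (Iic (-s)).indicator stdphi (-t) = (Ici s).indicator stdphi t := by
    intro t
    by_cases h : s ≤ t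
    · rw [indicator_of_mem (by simpa using h), indicator_of_mem (mem_Ici.2 h), stdphi_even]
    · rw [indicator_of_notMem (by simpa using h), indicator_of_notMem (by simpa using h)]
  have : ∫ t in Iic (-s), stdphi t = ∫ t in Ici s, stdphi t := by
    rw [← integral_indicator measurableSet_Iic, ← integral_indicator measurableSet_Ici,
      ← integral_neg_eq_self ((Iic (-s)).indicator stdphi)]
    exact integral_congr_ae (Filter.Eventually.of_forall h0)
  rw [← integral_Iic_stdphi, this, integral_Ici_eq_integral_Ioi]
  have := integral_Ioi_stdphi_shift 0 s
  simp only [sub_zero] at this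
  linarith [this]

lemma integral_Ioc_stdphi {a b : ℝ} (h : a ≤ b) :
    ∫ t in Ioc a b, stdphi t = stdPhi b - stdPhi a := by
  have := integral_Ioc_stdphi_shift 0 h; simpa using this

lemma stdPhi_strictMono : StrictMono stdPhi := by
  intro a b hab
  have h1 : 0 < ∫ t in Ioc a b, stdphi t := by
    rw [setIntegral_pos_iff_support_of_nonneg_ae
      (ae_of_all _ fun t => (stdphi_pos t).le) (integrable_stdphi.integrableOn)]
    have : Function.support stdphi = univ := by
      ext t; simp [(stdphi_pos t).ne']
    rw [this, univ_inter]
    simpa using hab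
  have := integral_Ioc_stdphi hab.le
  linarith [h1.trans_eq this]

lemma stdPhi_hasDerivAt (y : ℝ) : HasDerivAt stdPhi (stdphi y) y := by
  have heq : ∀ z : ℝ, stdPhi z = stdPhi 0 + ∫ t in (0:ℝ)..z, stdphi t := by
    intro z
    have := intervalIntegral.integral_Iic_sub_Iic (μ := volume) (f := stdphi)
      integrable_stdphi.integrableOn integrable_stdphi.integrableOn (a := (0:ℝ)) (b := z)
    rw [integral_Iic_stdphi, integral_Iic_stdphi] at this
    linarith
  have hd : HasDerivAt (fun z => stdPhi 0 + ∫ t in (0:ℝ)..z, stdphi t) (stdphi y) y := by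
    refine HasDerivAt.const_add _ ?_
    exact intervalIntegral.integral_hasDerivAt_right
      (integrable_stdphi.intervalIntegrable)
      (continuous_stdphi.stronglyMeasurableAtFilter _ _)
      continuous_stdphi.continuousAt
  exact hd.congr_of_eventuallyEq (Filter.Eventually.of_forall fun z => heq z) |>.congr_deriv rfl

lemma continuous_stdPhi : Continuous stdPhi :=
  continuous_iff_continuousAt.2 fun y => (stdPhi_hasDerivAt y).continuousAt

lemma stdPhi_zero : stdPhi 0 = 1 / 2 := by
  have := stdPhi_neg 0; rw [neg_zero] at this; linarith

lemma stdPhi_pos' (s : ℝ) : 0 < stdPhi s := by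
  have h := integral_Iic_stdphi s
  rw [← h, setIntegral_pos_iff_support_of_nonneg_ae
    (ae_of_all _ fun t => (stdphi_pos t).le) (integrable_stdphi.integrableOn)]
  have hs : Function.support stdphi = univ := by ext t; simp [(stdphi_pos t).ne']
  rw [hs, univ_inter]
  simp

lemma stdPhi_lt_one (s : ℝ) : stdPhi s < 1 := by
  have := stdPhi_neg (-s); rw [neg_neg] at this
  have := stdPhi_pos' (-s); linarith [stdPhi_neg s]

lemma stdPhi_tendsto_atTop : Filter.Tendsto stdPhi Filter.atTop (nhds 1) := by
  have h := tendsto_measure_Iic_atTop (μ := gaussianReal 0 1)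
  rw [measure_univ] at h
  have h2 := (ENNReal.tendsto_toReal ENNReal.one_ne_top).comp h
  simp only [ENNReal.toReal_one] at h2
  exact h2

lemma exists_stdPhi_eq {p : ℝ} (h1 : 0 < p) (h2 : p < 1) : ∃ z, stdPhi z = p := by
  have hT := stdPhi_tendsto_atTop
  obtain ⟨B, hB⟩ := (hT.eventually (eventually_gt_nhds h2)).exists
  have hBot : Filter.Tendsto stdPhi Filter.atBot (nhds 0) := by
    have : ∀ y : ℝ, stdPhi y = 1 - stdPhi (-y) := by
      intro y; have := stdPhi_neg (-y); rw [neg_neg] at this; linarith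
    rw [funext this]
    have : Filter.Tendsto (fun y : ℝ => stdPhi (-y)) Filter.atBot (nhds 1) :=
      hT.comp Filter.tendsto_neg_atBot_atTop
    simpa using (tendsto_const_nhds (x := (1:ℝ))).sub this
  obtain ⟨A, hA⟩ := (hBot.eventually (eventually_lt_nhds h1)).exists
  have hAB : A ≤ B := by
    by_contra hh
    exact absurd (stdPhi_strictMono (lt_of_not_ge hh)) (by linarith)
  have := intermediate_value_Icc hAB continuous_stdPhi.continuousOn
  obtain ⟨z, _, hz⟩ := this ⟨hA.le, hB.le⟩
  exact ⟨z, hz⟩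

lemma stdPhi_stdPhiInv {p : ℝ} (h1 : 0 < p) (h2 : p < 1) : stdPhi (stdPhiInv p) = p := by
  obtain ⟨z, hz⟩ := exists_stdPhi_eq h1 h2
  have hset : {x : ℝ | p ≤ stdPhi x} = Ici z := by
    ext t; simp only [mem_setOf_eq, mem_Ici, ← hz]
    exact ⟨fun h => stdPhi_strictMono.le_iff_le.1 h, fun h => stdPhi_strictMono.le_iff_le.2 h⟩
  rw [stdPhiInv, hset, csInf_Ici, hz]

lemma integral_Ioc_mul_stdphi_shift (x : ℝ) {A B : ℝ} (h : A ≤ B) :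
    ∫ t in Ioc A B, (t - x) * stdphi (t - x) = stdphi (A - x) - stdphi (B - x) := by
  have hderiv : ∀ t : ℝ, HasDerivAt (fun t => -stdphi (t - x)) ((t - x) * stdphi (t - x)) t := by
    intro t
    have h1 : HasDerivAt (fun t : ℝ => -(t - x) ^ 2 / 2) (-(t - x)) t := by
      have := (((hasDerivAt_id t).sub_const x).pow 2).neg.div_const 2
      exact this.congr_deriv (by simp only [id]; ring)
    have h2 := (h1.exp.const_mul ((Real.sqrt (2 * Real.pi))⁻¹)).neg
    have h3 : HasDerivAt (fun t : ℝ => -stdphi (t - x))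
        (-((Real.sqrt (2 * Real.pi))⁻¹ * (Real.exp (-(t - x) ^ 2 / 2) * -(t - x)))) t := h2
    convert h3 using 1
    simp only [stdphi]; ring
  have hcont : Continuous fun t => (t - x) * stdphi (t - x) :=
    (continuous_id.sub continuous_const).mul (continuous_stdphi.comp (continuous_id.sub continuous_const))
  have := intervalIntegral.integral_eq_sub_of_hasDerivAt (fun t _ => hderiv t)
    (hcont.intervalIntegrable A B)
  rw [intervalIntegral.integral_of_le h] at this
  rw [this]; ring

lemma sub_one_le_mul_log {x : ℝ} (hx : 0 ≤ x) : x - 1 ≤ x * Real.log x := by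
  rcases eq_or_lt_of_le hx with h | h
  · simp [← h]
  · have h1 := Real.add_one_le_exp (-Real.log x)
    rw [Real.exp_neg, Real.exp_log h] at h1
    have h2 : x * (-Real.log x + 1) ≤ x * x⁻¹ := mul_le_mul_of_nonneg_left h1 hx
    rw [mul_inv_cancel₀ h.ne'] at h2
    nlinarith

lemma integrable_of_bounded {μ : Measure ℝ} [IsFiniteMeasure μ] {f : ℝ → ℝ} (hf : Continuous f)
    {C : ℝ} (hC : ∀ t, |f t| ≤ C) : Integrable f μ :=
  Integrable.mono' (integrable_const C) hf.aestronglyMeasurable (ae_of_all _ hC)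

lemma gibbs_nonneg (P ν : Measure ℝ) [IsProbabilityMeasure P] [IsProbabilityMeasure ν]
    (h : P ≪ ν) (hint : Integrable (llr P ν) P) : 0 ≤ ∫ t, llr P ν t ∂P := by
  have h1 : ∫ t, (P.rnDeriv ν t).toReal • llr P ν t ∂ν = ∫ t, llr P ν t ∂P :=
    integral_rnDeriv_smul h
  rw [← h1]
  have hρ : Integrable (fun t => (P.rnDeriv ν t).toReal) ν := Measure.integrable_toReal_rnDeriv
  have hρl : Integrable (fun t => (P.rnDeriv ν t).toReal • llr P ν t) ν :=
    (integrable_rnDeriv_smul_iff h).mpr hint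
  have hmono : ∫ t, ((P.rnDeriv ν t).toReal - 1) ∂ν
      ≤ ∫ t, (P.rnDeriv ν t).toReal • llr P ν t ∂ν := by
    refine integral_mono (hρ.sub (integrable_const 1)) hρl fun t => ?_
    have := sub_one_le_mul_log (ENNReal.toReal_nonneg (a := P.rnDeriv ν t))
    simpa [llr, smul_eq_mul] using this
  have hval : ∫ t, ((P.rnDeriv ν t).toReal - 1) ∂ν = 0 := by
    rw [integral_sub hρ (integrable_const 1), Measure.integral_toReal_rnDeriv h]
    simp
  linarith

lemma llr_integral_ge (P Q : Measure ℝ) [IsProbabilityMeasure P] [IsProbabilityMeasure Q]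
    (hPQ : P ≪ Q) (hint : Integrable (llr P Q) P) {g : ℝ → ℝ} (hg : Continuous g)
    {C : ℝ} (hb : ∀ t, |g t| ≤ C)
    (hQ1 : ∫ t, Real.exp (g t) ∂Q ≤ 1) :
    ∫ t, g t ∂P ≤ ∫ t, llr P Q t ∂P := by
  have hgexpQ : Integrable (fun t => Real.exp (g t)) Q := by
    refine integrable_of_bounded hg.rexp (C := Real.exp C) fun t => ?_
    rw [abs_of_pos (Real.exp_pos _)]
    exact Real.exp_le_exp.2 (abs_le.1 (hb t)).2
  have hprob : IsProbabilityMeasure (Q.tilted g) := isProbabilityMeasure_tilted hgexpQ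
  have hPt : P ≪ Q.tilted g := hPQ.trans (absolutelyContinuous_tilted hgexpQ)
  have hgP : Integrable g P := integrable_of_bounded hg hb
  have hintt : Integrable (llr P (Q.tilted g)) P :=
    integrable_llr_tilted_right hPQ hgP hint hgexpQ
  have h0 : 0 ≤ ∫ t, llr P (Q.tilted g) t ∂P := gibbs_nonneg P (Q.tilted g) hPt hintt
  have heq := integral_llr_tilted_right hPQ hgP hgexpQ hint
  have hlog : Real.log (∫ t, Real.exp (g t) ∂Q) ≤ 0 :=
    Real.log_nonpos (integral_nonneg fun t => (Real.exp_pos _).le) hQ1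
  linarith [heq]

lemma isProbabilityMeasure_mix {ε : ℝ} (h0 : 0 ≤ ε) (h1 : ε ≤ 1) (μ H : Measure ℝ)
    [IsProbabilityMeasure μ] [IsProbabilityMeasure H] : IsProbabilityMeasure (mix ε μ H) := by
  constructor
  simp only [mix, Measure.coe_add, Measure.coe_smul, Pi.add_apply, Pi.smul_apply,
    measure_univ, smul_eq_mul, mul_one]
  rw [← ENNReal.ofReal_add (by linarith) h0, sub_add_cancel, ENNReal.ofReal_one]

lemma integral_mix {ε : ℝ} (hε0 : 0 ≤ ε) (hε1 : ε ≤ 1) (μ H : Measure ℝ) (f : ℝ → ℝ)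
    (h1 : Integrable f μ) (h2 : Integrable f H) :
    ∫ t, f t ∂(mix ε μ H) = (1 - ε) * ∫ t, f t ∂μ + ε * ∫ t, f t ∂H := by
  rw [mix, integral_add_measure (h1.smul_measure ENNReal.ofReal_ne_top)
      (h2.smul_measure ENNReal.ofReal_ne_top),
    integral_smul_measure, integral_smul_measure,
    ENNReal.toReal_ofReal (by linarith), ENNReal.toReal_ofReal hε0]
  simp [smul_eq_mul]

lemma integral_withDensity_ofReal {ρ : ℝ → ℝ} (hρ : Measurable ρ) (hρ0 : ∀ t, 0 ≤ ρ t)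
    (g : ℝ → ℝ) :
    ∫ t, g t ∂(volume.withDensity (fun t => ENNReal.ofReal (ρ t)))
      = ∫ t, ρ t * g t := by
  have he : (fun t => ENNReal.ofReal (ρ t)) = fun t => ((ρ t).toNNReal : ℝ≥0∞) := rfl
  rw [he, integral_withDensity_eq_integral_smul hρ.real_toNNReal]
  congr 1; ext t
  simp [NNReal.smul_def, Real.coe_toNNReal _ (hρ0 t)]

lemma gaussianPDFReal_eq_stdphi_shift (μ t : ℝ) : gaussianPDFReal μ 1 t = stdphi (t - μ) := by
  rw [← stdphi_eq, gaussianPDFReal_sub, zero_add]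

lemma integral_gaussianReal (μ : ℝ) (f : ℝ → ℝ) :
    ∫ t, f t ∂(gaussianReal μ 1) = ∫ t, stdphi (t - μ) * f t := by
  rw [gaussianReal_of_var_ne_zero _ one_ne_zero, gaussianPDF_def,
    integral_withDensity_ofReal (measurable_gaussianPDFReal μ 1)
      (gaussianPDFReal_nonneg μ 1) f]
  congr 1; ext t; rw [gaussianPDFReal_eq_stdphi_shift]

lemma integral_split (f : ℝ → ℝ) (hf : Integrable f) {A B : ℝ} (hAB : A ≤ B) :
    ∫ t, f t = (∫ t in Iic A, f t) + (∫ t in Ioc A B, f t) + ∫ t in Ioi B, f t := by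
  have h1 := intervalIntegral.integral_Iic_add_Ioi (μ := volume) (b := B)
    hf.integrableOn hf.integrableOn
  have h2 := intervalIntegral.integral_Iic_sub_Iic (μ := volume) (f := f)
    hf.integrableOn hf.integrableOn (a := A) (b := B)
  rw [intervalIntegral.integral_of_le hAB] at h2
  linarith

section main
variable {ε x Δ c m : ℝ}

/-- the clamped log-likelihood ratio -/
def gclamp (m x Δ : ℝ) (t : ℝ) : ℝ := max (-m) (min m (Δ * (x + Δ / 2 - t)))

lemma gclamp_continuous : Continuous (gclamp m x Δ) := by
  unfold gclamp; fun_prop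

lemma gclamp_abs_le (hm : 0 ≤ m) (t : ℝ) : |gclamp m x Δ t| ≤ m := by
  rw [abs_le, gclamp]
  constructor
  · exact le_max_left _ _
  · exact max_le (by linarith) (min_le_left _ _)

lemma gclamp_left (hm : 0 ≤ m) (hΔ : 0 < Δ) {a : ℝ} (ha : a = Δ / 2 - m / Δ) {t : ℝ}
    (ht : t ≤ x + a) : gclamp m x Δ t = m := by
  have h1 : m ≤ Δ * (x + Δ / 2 - t) := by
    have : Δ * (x + Δ / 2 - (x + a)) = m := by rw [ha]; field_simp; ring
    nlinarith
  rw [gclamp, min_eq_left h1, max_eq_right (by linarith)]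

lemma gclamp_mid (hm : 0 ≤ m) (hΔ : 0 < Δ) {a b : ℝ} (ha : a = Δ / 2 - m / Δ)
    (hb : b = Δ / 2 + m / Δ) {t : ℝ} (ht1 : x + a < t) (ht2 : t ≤ x + b) :
    gclamp m x Δ t = Δ * (x + Δ / 2 - t) := by
  have e1 : Δ * (x + Δ / 2 - (x + a)) = m := by rw [ha]; field_simp; ring
  have e2 : Δ * (x + Δ / 2 - (x + b)) = -m := by rw [hb]; field_simp; ring
  have h1 : Δ * (x + Δ / 2 - t) ≤ m := by nlinarith
  have h2 : -m ≤ Δ * (x + Δ / 2 - t) := by nlinarith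
  rw [gclamp, min_eq_right h1, max_eq_right h2]

lemma gclamp_right (hm : 0 ≤ m) (hΔ : 0 < Δ) {b : ℝ} (hb : b = Δ / 2 + m / Δ) {t : ℝ}
    (ht : x + b ≤ t) : gclamp m x Δ t = -m := by
  have e2 : Δ * (x + Δ / 2 - (x + b)) = -m := by rw [hb]; field_simp; ring
  have h1 : Δ * (x + Δ / 2 - t) ≤ -m := by nlinarith
  rw [gclamp, max_eq_left]
  exact (min_le_right _ _).trans h1

/-- likelihood ratio identity -/
lemma lr_identity (x Δ t : ℝ) :
    stdphi (t - x) = Real.exp (Δ * (x + Δ / 2 - t)) * stdphi (t - x - Δ) := by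
  simp only [stdphi]
  rw [mul_left_comm, ← Real.exp_add]
  congr 2
  ring

lemma integrable_mul_bounded {f : ℝ → ℝ} (hf : Continuous f) {C : ℝ} (hC : ∀ t, |f t| ≤ C)
    (μ : ℝ) : Integrable (fun t => stdphi (t - μ) * f t) := by
  have h := (integrable_stdphi.comp_sub_right μ).bdd_mul hf.aestronglyMeasurable
    (c := C) (ae_of_all _ fun t => by simpa using hC t)
  exact h.congr (ae_of_all _ fun t => mul_comm (f t) (stdphi (t - μ)))

lemma key1 (hm : 0 ≤ m) (hΔ : 0 < Δ) {a b : ℝ} (ha : a = Δ / 2 - m / Δ)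
    (hb : b = Δ / 2 + m / Δ) :
    ∫ t, gclamp m x Δ t ∂(gaussianReal x 1)
      = m * (stdPhi a + stdPhi b - 1) + Δ ^ 2 / 2 * (stdPhi b - stdPhi a)
        - Δ * (stdphi a - stdphi b) := by
  have hab : a ≤ b := by rw [ha, hb]; have := div_nonneg hm hΔ.le; linarith
  have hABle : x + a ≤ x + b := by linarith
  rw [integral_gaussianReal]
  rw [integral_split _ (integrable_mul_bounded gclamp_continuous (gclamp_abs_le hm) x) hABle]
  have hIic : ∫ t in Iic (x + a), stdphi (t - x) * gclamp m x Δ t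
      = m * stdPhi a := by
    rw [setIntegral_congr_fun measurableSet_Iic
      (fun t (ht : t ≤ x + a) => by rw [gclamp_left hm hΔ ha ht])]
    rw [integral_mul_const, integral_Iic_stdphi_shift]
    rw [add_sub_cancel_left]
    ring
  have hIoi : ∫ t in Ioi (x + b), stdphi (t - x) * gclamp m x Δ t
      = -m * (1 - stdPhi b) := by
    rw [setIntegral_congr_fun measurableSet_Ioi
      (fun t (ht : x + b < t) => by rw [gclamp_right hm hΔ hb ht.le])]
    rw [integral_mul_const, integral_Ioi_stdphi_shift]
    rw [add_sub_cancel_left]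
    ring
  have hIoc : ∫ t in Ioc (x + a) (x + b), stdphi (t - x) * gclamp m x Δ t
      = Δ * (Δ / 2) * (stdPhi b - stdPhi a) - Δ * (stdphi a - stdphi b) := by
    rw [setIntegral_congr_fun measurableSet_Ioc
      (fun t ht => by rw [gclamp_mid hm hΔ ha hb ht.1 ht.2])]
    have hpt : ∀ t : ℝ, stdphi (t - x) * (Δ * (x + Δ / 2 - t))
        = Δ * (Δ / 2) * stdphi (t - x) - Δ * ((t - x) * stdphi (t - x)) := by
      intro t; ring
    rw [setIntegral_congr_fun measurableSet_Ioc (fun t _ => hpt t)]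
    have hi1 : IntegrableOn (fun t => Δ * (Δ / 2) * stdphi (t - x)) (Ioc (x + a) (x + b)) :=
      ((integrable_stdphi.comp_sub_right x).const_mul _).integrableOn
    have hi2 : IntegrableOn (fun t => Δ * ((t - x) * stdphi (t - x))) (Ioc (x + a) (x + b)) := by
      exact Continuous.integrableOn_Ioc
        (((continuous_id.sub continuous_const).mul
          (continuous_stdphi.comp (continuous_id.sub continuous_const))).const_smul Δ)
    rw [integral_sub hi1 hi2, integral_const_mul, integral_const_mul,
      integral_Ioc_stdphi_shift x hABle, integral_Ioc_mul_stdphi_shift x hABle]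
    rw [add_sub_cancel_left, add_sub_cancel_left]
  rw [hIic, hIoc, hIoi]
  ring

lemma key2 (hm : 0 ≤ m) (hΔ : 0 < Δ) (hc : Real.exp (-m) = c) {a b : ℝ}
    (ha : a = Δ / 2 - m / Δ) (hb : b = Δ / 2 + m / Δ) :
    ∫ t, Real.exp (gclamp m x Δ t) ∂(gaussianReal (x + Δ) 1)
      = (1 / c) * (1 - stdPhi b) + (stdPhi b - stdPhi a) + c * stdPhi a := by
  have hab : a ≤ b := by rw [ha, hb]; have := div_nonneg hm hΔ.le; linarith
  have hABle : x + a ≤ x + b := by linarith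
  have habΔ : a + b = Δ := by rw [ha, hb]; ring
  have hcpos : 0 < c := hc ▸ Real.exp_pos _
  have hcm : Real.exp m = 1 / c := by
    rw [← hc, Real.exp_neg, one_div, inv_inv]
  rw [integral_gaussianReal]
  have hbd : ∀ t, |Real.exp (gclamp m x Δ t)| ≤ Real.exp m := fun t => by
    rw [abs_of_pos (Real.exp_pos _)]
    exact Real.exp_le_exp.2 (abs_le.1 (gclamp_abs_le hm t)).2
  rw [integral_split _ (integrable_mul_bounded gclamp_continuous.rexp hbd (x + Δ)) hABle]
  have hIic : ∫ t in Iic (x + a), stdphi (t - (x + Δ)) * Real.exp (gclamp m x Δ t)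
      = (1 / c) * (1 - stdPhi b) := by
    rw [setIntegral_congr_fun measurableSet_Iic
      (fun t (ht : t ≤ x + a) => by rw [gclamp_left hm hΔ ha ht])]
    rw [integral_mul_const, integral_Iic_stdphi_shift, hcm]
    have : x + a - (x + Δ) = -b := by linarith
    rw [this, stdPhi_neg]
    ring
  have hIoi : ∫ t in Ioi (x + b), stdphi (t - (x + Δ)) * Real.exp (gclamp m x Δ t)
      = c * stdPhi a := by
    rw [setIntegral_congr_fun measurableSet_Ioi
      (fun t (ht : x + b < t) => by rw [gclamp_right hm hΔ hb ht.le])]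
    rw [integral_mul_const, integral_Ioi_stdphi_shift, hc]
    have : x + b - (x + Δ) = -a := by linarith
    rw [this, stdPhi_neg]
    ring
  have hIoc : ∫ t in Ioc (x + a) (x + b), stdphi (t - (x + Δ)) * Real.exp (gclamp m x Δ t)
      = stdPhi b - stdPhi a := by
    rw [setIntegral_congr_fun measurableSet_Ioc
      (fun t ht => by rw [gclamp_mid hm hΔ ha hb ht.1 ht.2])]
    have hpt : ∀ t : ℝ, stdphi (t - (x + Δ)) * Real.exp (Δ * (x + Δ / 2 - t))
        = stdphi (t - x) := by
      intro t
      rw [lr_identity x Δ t]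
      have : t - x - Δ = t - (x + Δ) := by ring
      rw [this]; ring
    rw [setIntegral_congr_fun measurableSet_Ioc (fun t _ => hpt t)]
    rw [integral_Ioc_stdphi_shift x hABle, add_sub_cancel_left, add_sub_cancel_left]
  rw [hIic, hIoc, hIoi]

end main

lemma measurable_stdphi : Measurable stdphi := continuous_stdphi.measurable

lemma measurable_stdphi_shift (μ : ℝ) : Measurable fun t : ℝ => stdphi (t - μ) :=
  measurable_stdphi.comp (measurable_id.sub measurable_const)

section upper
variable {ε x Δ c m a b : ℝ}

def hdens (ε x Δ c b : ℝ) : ℝ → ℝ :=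
  (Ioi (x + b)).indicator fun t => (1 - ε) / ε * (c * stdphi (t - (x + Δ)) - stdphi (t - x))

def h'dens (ε x Δ c a : ℝ) : ℝ → ℝ :=
  (Iic (x + a)).indicator fun t => (1 - ε) / ε * (c * stdphi (t - x) - stdphi (t - (x + Δ)))

def pdens (ε x Δ c b : ℝ) (t : ℝ) : ℝ :=
  (1 - ε) * (if t ≤ x + b then stdphi (t - x) else c * stdphi (t - (x + Δ)))

def qdens (ε x Δ c a : ℝ) (t : ℝ) : ℝ :=
  (1 - ε) * (if t ≤ x + a then c * stdphi (t - x) else stdphi (t - (x + Δ)))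

lemma measurable_hdens : Measurable (hdens ε x Δ c b) :=
  Measurable.indicator
    ((((measurable_stdphi_shift (x + Δ)).const_mul c).sub (measurable_stdphi_shift x)).const_mul _)
    measurableSet_Ioi

lemma measurable_h'dens : Measurable (h'dens ε x Δ c a) :=
  Measurable.indicator
    ((((measurable_stdphi_shift x).const_mul c).sub (measurable_stdphi_shift (x + Δ))).const_mul _)
    measurableSet_Iic

lemma lr_identity' (x Δ t : ℝ) :
    stdphi (t - (x + Δ)) = Real.exp (-(Δ * (x + Δ / 2 - t))) * stdphi (t - x) := by
  rw [lr_identity x Δ t, ← mul_assoc, ← Real.exp_add, neg_add_cancel, Real.exp_zero, one_mul]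
  ring_nf

lemma ratio_right (hΔ : 0 < Δ) (hc : Real.exp (-m) = c) (hb : b = Δ / 2 + m / Δ)
    {t : ℝ} (ht : x + b ≤ t) : stdphi (t - x) ≤ c * stdphi (t - (x + Δ)) := by
  have e2 : Δ * (x + Δ / 2 - (x + b)) = -m := by rw [hb]; field_simp; ring
  have h1 : Δ * (x + Δ / 2 - t) ≤ -m := by nlinarith
  have h2 : t - x - Δ = t - (x + Δ) := by ring
  rw [lr_identity x Δ t, h2, ← hc]
  exact mul_le_mul_of_nonneg_right (Real.exp_le_exp.2 h1) (stdphi_pos _).le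

lemma ratio_left (hΔ : 0 < Δ) (hc : Real.exp (-m) = c) (ha : a = Δ / 2 - m / Δ)
    {t : ℝ} (ht : t ≤ x + a) : stdphi (t - (x + Δ)) ≤ c * stdphi (t - x) := by
  have e1 : Δ * (x + Δ / 2 - (x + a)) = m := by rw [ha]; field_simp; ring
  have h1 : -(Δ * (x + Δ / 2 - t)) ≤ -m := by nlinarith
  rw [lr_identity' x Δ t, ← hc]
  exact mul_le_mul_of_nonneg_right (Real.exp_le_exp.2 h1) (stdphi_pos _).le

lemma pdens_eq_exp_gclamp_mul (hm : 0 ≤ m) (hΔ : 0 < Δ) (hc : Real.exp (-m) = c)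
    (ha : a = Δ / 2 - m / Δ) (hb : b = Δ / 2 + m / Δ) (hab : a ≤ b) (t : ℝ) :
    pdens ε x Δ c b t = Real.exp (gclamp m x Δ t) * qdens ε x Δ c a t := by
  rcases le_or_gt t (x + a) with h1 | h1
  · rw [gclamp_left hm hΔ ha h1, pdens, qdens, if_pos h1, if_pos (h1.trans (by linarith))]
    have hh : Real.exp m * c = 1 := by rw [← hc, ← Real.exp_add]; simp
    linear_combination (-((1 - ε) * stdphi (t - x))) * hh
  · rcases le_or_gt t (x + b) with h2 | h2
    · rw [gclamp_mid hm hΔ ha hb h1 h2, pdens, qdens, if_pos h2, if_neg (not_le.2 h1)]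
      have h3 : t - x - Δ = t - (x + Δ) := by ring
      rw [lr_identity x Δ t, h3]
      ring
    · rw [gclamp_right hm hΔ hb h2.le, pdens, qdens, if_neg (not_le.2 h2),
        if_neg (by intro h; linarith), hc]
      ring

lemma mix_eq_pdens (hε : 0 < ε) (hε1 : ε < 1) (hΔ : 0 < Δ) (hc : Real.exp (-m) = c)
    (hb : b = Δ / 2 + m / Δ) :
    mix ε (gaussianReal x 1) (volume.withDensity fun t => ENNReal.ofReal (hdens ε x Δ c b t))
      = volume.withDensity fun t => ENNReal.ofReal (pdens ε x Δ c b t) := by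
  have hcpos : 0 < c := hc ▸ Real.exp_pos _
  have hmeas_h : Measurable fun t => ENNReal.ofReal (hdens ε x Δ c b t) :=
    measurable_hdens.ennreal_ofReal
  have hmeas_g : Measurable (gaussianPDF x 1) := measurable_gaussianPDF x 1
  rw [mix, gaussianReal_of_var_ne_zero _ one_ne_zero,
    ← withDensity_smul _ hmeas_g, ← withDensity_smul _ hmeas_h,
    ← withDensity_add_left (hmeas_g.const_smul _)]
  congr 1
  funext t
  simp only [Pi.add_apply, Pi.smul_apply, smul_eq_mul, gaussianPDF,
    gaussianPDFReal_eq_stdphi_shift]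
  rcases le_or_gt t (x + b) with h1 | h1
  · rw [hdens, indicator_of_notMem (by simpa using h1), ENNReal.ofReal_zero, mul_zero, add_zero,
      pdens, if_pos h1, ENNReal.ofReal_mul (by linarith : (0:ℝ) ≤ 1 - ε)]
  · have hnn : 0 ≤ c * stdphi (t - (x + Δ)) - stdphi (t - x) :=
      sub_nonneg.2 (ratio_right hΔ hc hb h1.le)
    rw [hdens, indicator_of_mem (by simpa using h1),
      ← ENNReal.ofReal_mul (by linarith : (0:ℝ) ≤ 1 - ε),
      ← ENNReal.ofReal_mul hε.le,
      ← ENNReal.ofReal_add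
        (mul_nonneg (by linarith) (stdphi_pos _).le)
        (mul_nonneg hε.le (mul_nonneg (div_nonneg (by linarith) hε.le) hnn))]
    rw [pdens, if_neg (not_le.2 h1)]
    congr 1
    field_simp
    ring

lemma mix_eq_qdens (hε : 0 < ε) (hε1 : ε < 1) (hΔ : 0 < Δ) (hc : Real.exp (-m) = c)
    (ha : a = Δ / 2 - m / Δ) :
    mix ε (gaussianReal (x + Δ) 1) (volume.withDensity fun t => ENNReal.ofReal (h'dens ε x Δ c a t))
      = volume.withDensity fun t => ENNReal.ofReal (qdens ε x Δ c a t) := by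
  have hcpos : 0 < c := hc ▸ Real.exp_pos _
  have hmeas_h : Measurable fun t => ENNReal.ofReal (h'dens ε x Δ c a t) :=
    measurable_h'dens.ennreal_ofReal
  have hmeas_g : Measurable (gaussianPDF (x + Δ) 1) := measurable_gaussianPDF _ 1
  rw [mix, gaussianReal_of_var_ne_zero _ one_ne_zero,
    ← withDensity_smul _ hmeas_g, ← withDensity_smul _ hmeas_h,
    ← withDensity_add_left (hmeas_g.const_smul _)]
  congr 1
  funext t
  simp only [Pi.add_apply, Pi.smul_apply, smul_eq_mul, gaussianPDF,
    gaussianPDFReal_eq_stdphi_shift]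
  rcases le_or_gt t (x + a) with h1 | h1
  · have hnn : 0 ≤ c * stdphi (t - x) - stdphi (t - (x + Δ)) :=
      sub_nonneg.2 (ratio_left hΔ hc ha h1)
    rw [h'dens, indicator_of_mem (by simpa using h1),
      ← ENNReal.ofReal_mul (by linarith : (0:ℝ) ≤ 1 - ε),
      ← ENNReal.ofReal_mul hε.le,
      ← ENNReal.ofReal_add
        (mul_nonneg (by linarith) (stdphi_pos _).le)
        (mul_nonneg hε.le (mul_nonneg (div_nonneg (by linarith) hε.le) hnn))]
    rw [qdens, if_pos h1]
    congr 1
    field_simp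
    ring
  · rw [h'dens, indicator_of_notMem (by simpa using h1), ENNReal.ofReal_zero, mul_zero, add_zero,
      qdens, if_neg (not_le.2 h1), ENNReal.ofReal_mul (by linarith : (0:ℝ) ≤ 1 - ε)]
end upper

section upper
variable {ε x Δ c m a b : ℝ}

lemma integrable_hdens (hε : 0 < ε) : Integrable (hdens ε x Δ c b) := by
  unfold hdens
  exact ((((integrable_stdphi.comp_sub_right (x + Δ)).const_mul c).sub
    (integrable_stdphi.comp_sub_right x)).const_mul _).indicator measurableSet_Ioi

lemma integrable_h'dens (hε : 0 < ε) : Integrable (h'dens ε x Δ c a) := by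
  unfold h'dens
  exact ((((integrable_stdphi.comp_sub_right x).const_mul c).sub
    (integrable_stdphi.comp_sub_right (x + Δ))).const_mul _).indicator measurableSet_Iic

lemma hdens_nonneg (hε : 0 < ε) (hε1 : ε < 1) (hΔ : 0 < Δ) (hc : Real.exp (-m) = c)
    (hb : b = Δ / 2 + m / Δ) (t : ℝ) : 0 ≤ hdens ε x Δ c b t := by
  unfold hdens
  refine indicator_nonneg (fun u hu => ?_) t
  exact mul_nonneg (div_nonneg (by linarith) hε.le)
    (sub_nonneg.2 (ratio_right hΔ hc hb (le_of_lt hu)))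

lemma h'dens_nonneg (hε : 0 < ε) (hε1 : ε < 1) (hΔ : 0 < Δ) (hc : Real.exp (-m) = c)
    (ha : a = Δ / 2 - m / Δ) (t : ℝ) : 0 ≤ h'dens ε x Δ c a t := by
  unfold h'dens
  refine indicator_nonneg (fun u hu => ?_) t
  exact mul_nonneg (div_nonneg (by linarith) hε.le)
    (sub_nonneg.2 (ratio_left hΔ hc ha hu))

lemma hdens_prob (hε : 0 < ε) (hε1 : ε < 1) (hΔ : 0 < Δ) (hc : Real.exp (-m) = c)
    (ha : a = Δ / 2 - m / Δ) (hb : b = Δ / 2 + m / Δ)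
    (hE : (1 - ε) * (c * stdPhi a + stdPhi b) = 1) :
    IsProbabilityMeasure (volume.withDensity fun t => ENNReal.ofReal (hdens ε x Δ c b t)) := by
  constructor
  rw [withDensity_apply _ MeasurableSet.univ, Measure.restrict_univ,
    ← ofReal_integral_eq_lintegral_ofReal (integrable_hdens hε)
      (ae_of_all _ (hdens_nonneg hε hε1 hΔ hc hb))]
  have hval : ∫ t, hdens ε x Δ c b t = 1 := by
    rw [hdens, integral_indicator measurableSet_Ioi, integral_const_mul,
      integral_sub (((integrable_stdphi.comp_sub_right (x + Δ)).const_mul c).integrableOn)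
        ((integrable_stdphi.comp_sub_right x).integrableOn),
      integral_const_mul, integral_Ioi_stdphi_shift, integral_Ioi_stdphi_shift]
    have e1 : x + b - (x + Δ) = -a := by rw [ha, hb]; field_simp; ring
    have e2 : x + b - x = b := by ring
    rw [e1, e2, stdPhi_neg]
    field_simp
    linear_combination hE
  rw [hval, ENNReal.ofReal_one]

lemma h'dens_prob (hε : 0 < ε) (hε1 : ε < 1) (hΔ : 0 < Δ) (hc : Real.exp (-m) = c)
    (ha : a = Δ / 2 - m / Δ) (hb : b = Δ / 2 + m / Δ)
    (hE : (1 - ε) * (c * stdPhi a + stdPhi b) = 1) :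
    IsProbabilityMeasure (volume.withDensity fun t => ENNReal.ofReal (h'dens ε x Δ c a t)) := by
  constructor
  rw [withDensity_apply _ MeasurableSet.univ, Measure.restrict_univ,
    ← ofReal_integral_eq_lintegral_ofReal (integrable_h'dens hε)
      (ae_of_all _ (h'dens_nonneg hε hε1 hΔ hc ha))]
  have hval : ∫ t, h'dens ε x Δ c a t = 1 := by
    rw [h'dens, integral_indicator measurableSet_Iic, integral_const_mul,
      integral_sub (((integrable_stdphi.comp_sub_right x).const_mul c).integrableOn)
        ((integrable_stdphi.comp_sub_right (x + Δ)).integrableOn),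
      integral_const_mul, integral_Iic_stdphi_shift, integral_Iic_stdphi_shift]
    have e1 : x + a - (x + Δ) = -b := by rw [ha, hb]; field_simp; ring
    have e2 : x + a - x = a := by ring
    rw [e1, e2, stdPhi_neg]
    field_simp
    linear_combination hE
  rw [hval, ENNReal.ofReal_one]

lemma measurable_qdens : Measurable (qdens ε x Δ c a) := by
  unfold qdens
  exact (Measurable.ite measurableSet_Iic ((measurable_stdphi_shift x).const_mul c)
    (measurable_stdphi_shift (x + Δ))).const_mul _

lemma qdens_nonneg (hε1 : ε < 1) (hcpos : 0 < c) (t : ℝ) : 0 ≤ qdens ε x Δ c a t := by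
  unfold qdens
  rcases le_or_gt t (x + a) with h | h
  · rw [if_pos h]; exact mul_nonneg (by linarith) (mul_nonneg hcpos.le (stdphi_pos _).le)
  · rw [if_neg (not_le.2 h)]; exact mul_nonneg (by linarith) (stdphi_pos _).le

lemma qdens_withDensity (hm : 0 ≤ m) (hε1 : ε < 1) (hΔ : 0 < Δ)
    (hc : Real.exp (-m) = c) (ha : a = Δ / 2 - m / Δ) (hb : b = Δ / 2 + m / Δ) (hab : a ≤ b) :
    (volume.withDensity fun t => ENNReal.ofReal (qdens ε x Δ c a t)).withDensity
      (fun t => ENNReal.ofReal (Real.exp (gclamp m x Δ t)))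
      = volume.withDensity fun t => ENNReal.ofReal (pdens ε x Δ c b t) := by
  have hcpos : 0 < c := hc ▸ Real.exp_pos _
  rw [← withDensity_mul _ measurable_qdens.ennreal_ofReal
    (gclamp_continuous.rexp.measurable.ennreal_ofReal)]
  congr 1
  funext t
  simp only [Pi.mul_apply]
  rw [← ENNReal.ofReal_mul (qdens_nonneg hε1 hcpos t),
    pdens_eq_exp_gclamp_mul hm hΔ hc ha hb hab t, mul_comm]

lemma llr_pstar_qstar (hm : 0 ≤ m) (hε1 : ε < 1) (hΔ : 0 < Δ)
    (hc : Real.exp (-m) = c) (ha : a = Δ / 2 - m / Δ) (hb : b = Δ / 2 + m / Δ) (hab : a ≤ b)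
    [SigmaFinite (volume.withDensity fun t => ENNReal.ofReal (qdens ε x Δ c a t))] :
    llr (volume.withDensity fun t => ENNReal.ofReal (pdens ε x Δ c b t))
        (volume.withDensity fun t => ENNReal.ofReal (qdens ε x Δ c a t))
      =ᵐ[volume.withDensity fun t => ENNReal.ofReal (pdens ε x Δ c b t)] gclamp m x Δ := by
  set Q := volume.withDensity fun t => ENNReal.ofReal (qdens ε x Δ c a t) with hQ
  have h1 := Measure.rnDeriv_withDensity Q
    (f := fun t => ENNReal.ofReal (Real.exp (gclamp m x Δ t)))
    (gclamp_continuous.rexp.measurable.ennreal_ofReal)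
  rw [qdens_withDensity hm hε1 hΔ hc ha hb hab] at h1
  have hac : (volume.withDensity fun t => ENNReal.ofReal (pdens ε x Δ c b t)) ≪ Q := by
    rw [← qdens_withDensity hm hε1 hΔ hc ha hb hab]
    exact withDensity_absolutelyContinuous _ _
  filter_upwards [hac.ae_le h1] with t ht
  rw [llr, ht, ENNReal.toReal_ofReal (Real.exp_pos _).le, Real.log_exp]

lemma mpos_of_lt (hε1 : ε < 1) (hΔ : 0 < Δ) (hgt : 1 / (2 * (1 - ε)) < stdPhi (Δ / 2))
    (hF : Real.exp (-m) * stdPhi (Δ / 2 - m / Δ) + stdPhi (Δ / 2 + m / Δ) = 1 / (1 - ε)) :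
    0 < m := by
  set F : ℝ → ℝ := fun s => Real.exp (-s) * stdPhi (Δ / 2 - s / Δ) + stdPhi (Δ / 2 + s / Δ)
    with hFdef
  have hid : ∀ s : ℝ, Real.exp (-s) * stdphi (Δ / 2 - s / Δ) = stdphi (Δ / 2 + s / Δ) := by
    intro s
    simp only [stdphi]
    rw [mul_left_comm, ← Real.exp_add]
    congr 2
    field_simp
    ring
  have hF' : ∀ s : ℝ, HasDerivAt F (-(Real.exp (-s) * stdPhi (Δ / 2 - s / Δ))) s := by
    intro s
    have h1 : HasDerivAt (fun s : ℝ => Real.exp (-s)) (-Real.exp (-s)) s := by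
      simpa using ((hasDerivAt_id s).neg.exp)
    have h2 : HasDerivAt (fun s : ℝ => Δ / 2 - s / Δ) (-(1 / Δ)) s := by
      simpa using ((hasDerivAt_id s).div_const Δ).const_sub (Δ / 2)
    have h3 : HasDerivAt (fun s : ℝ => stdPhi (Δ / 2 - s / Δ))
        (stdphi (Δ / 2 - s / Δ) * (-(1 / Δ))) s :=
      (stdPhi_hasDerivAt (Δ / 2 - s / Δ)).comp (h₂ := stdPhi) s h2
    have h4 : HasDerivAt (fun s : ℝ => Δ / 2 + s / Δ) (1 / Δ) s := by
      simpa using ((hasDerivAt_id s).div_const Δ).const_add (Δ / 2)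
    have h5 : HasDerivAt (fun s : ℝ => stdPhi (Δ / 2 + s / Δ))
        (stdphi (Δ / 2 + s / Δ) * (1 / Δ)) s :=
      (stdPhi_hasDerivAt (Δ / 2 + s / Δ)).comp (h₂ := stdPhi) s h4
    have h6 := (h1.mul h3).add h5
    exact h6.congr_deriv (by rw [← hid s]; ring)
  have hanti : StrictAnti F := by
    refine strictAnti_of_hasDerivAt_neg hF' fun s => ?_
    have := mul_pos (Real.exp_pos (-s)) (stdPhi_pos' (Δ / 2 - s / Δ))
    linarith
  have hF0 : F 0 = 2 * stdPhi (Δ / 2) := by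
    simp [hFdef]
    ring
  have hFm : F m = 1 / (1 - ε) := hF
  have hlt : F m < F 0 := by
    rw [hFm, hF0]
    rw [div_lt_iff₀ (by linarith : (0:ℝ) < 2 * (1 - ε))] at hgt
    rw [div_lt_iff₀ (by linarith : (0:ℝ) < 1 - ε)]
    nlinarith
  exact hanti.lt_iff_gt.1 hlt
end upper

section final
variable {ε x Δ c m a b : ℝ}

lemma integral_gclamp_hstar (hm : 0 ≤ m) (hΔ : 0 < Δ) (hb : b = Δ / 2 + m / Δ)
    [IsProbabilityMeasure (volume.withDensity fun t => ENNReal.ofReal (hdens ε x Δ c b t))] :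
    ∫ t, gclamp m x Δ t ∂(volume.withDensity fun t => ENNReal.ofReal (hdens ε x Δ c b t))
      = -m := by
  set Hst := volume.withDensity fun t => ENNReal.ofReal (hdens ε x Δ c b t) with hHst
  have hnull : Hst (Iic (x + b)) = 0 := by
    rw [hHst, withDensity_apply _ measurableSet_Iic]
    have : ∀ᵐ t ∂(volume.restrict (Iic (x + b))),
        ENNReal.ofReal (hdens ε x Δ c b t) = 0 := by
      refine (ae_restrict_iff' measurableSet_Iic).2 (ae_of_all _ fun t ht => ?_)
      rw [hdens, indicator_of_notMem (by simpa using ht)]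
      simp
    rw [lintegral_congr_ae this, lintegral_zero]
  have hae : gclamp m x Δ =ᵐ[Hst] fun _ => -m := by
    rw [Filter.EventuallyEq, ae_iff]
    refine measure_mono_null (fun t ht => ?_) hnull
    simp only [mem_setOf_eq] at ht
    by_contra hcon
    exact ht (gclamp_right hm hΔ hb (not_le.1 (by simpa using hcon)).le)
  rw [integral_congr_ae hae, integral_const, probReal_univ]
  simp

set_option maxHeartbeats 1000000 in
/-- closed form of `kl^ε_G(x, x+Δ)` above the minimum gap. -/
theorem klG_closed_form (ε x Δ c : ℝ) (hε : ε ∈ Set.Ioo (0 : ℝ) (1 / 2))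
    (hΔ : Dmin ε < Δ) (hc : 0 < c)
    (hceq : 1 / (1 - ε) =
      c * stdPhi ((Δ - 2 / Δ * Real.log (1 / c)) / 2) +
        stdPhi ((Δ + 2 / Δ * Real.log (1 / c)) / 2)) :
    klG ε x (x + Δ) =
      ENNReal.ofReal ((1 - ε) *
        ((1 - c) * stdPhi ((Δ - 2 / Δ * Real.log (1 / c)) / 2) * Real.log (1 / c) +
          Δ ^ 2 / 2 * (stdPhi ((Δ + 2 / Δ * Real.log (1 / c)) / 2) -
            stdPhi ((Δ - 2 / Δ * Real.log (1 / c)) / 2)) -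
          Δ * (stdphi ((Δ - 2 / Δ * Real.log (1 / c)) / 2) -
            stdphi ((Δ + 2 / Δ * Real.log (1 / c)) / 2)))) := by
  obtain ⟨hε0, hε2⟩ := hε
  have hε1 : ε < 1 := by linarith
  -- positivity of Δ and the quantile inequality
  have hp1 : (0:ℝ) < 1 / (2 * (1 - ε)) := by
    apply div_pos one_pos; linarith
  have hp2 : 1 / (2 * (1 - ε)) < 1 := by
    rw [div_lt_one (by linarith)]; linarith
  have hphikey : stdPhi (stdPhiInv (1 / (2 * (1 - ε)))) = 1 / (2 * (1 - ε)) :=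
    stdPhi_stdPhiInv hp1 hp2
  have hhalf : (1:ℝ) / 2 < 1 / (2 * (1 - ε)) := by
    rw [div_lt_div_iff₀ (by norm_num) (by linarith)]; nlinarith
  have hx0pos : 0 < stdPhiInv (1 / (2 * (1 - ε))) := by
    have := stdPhi_strictMono.lt_iff_lt (a := 0) (b := stdPhiInv (1 / (2 * (1 - ε))))
    rw [stdPhi_zero, hphikey] at this
    exact this.1 hhalf
  have hΔ' : 2 * stdPhiInv (1 / (2 * (1 - ε))) < Δ := by
    rw [Dmin] at hΔ; exact hΔ
  have hΔpos : 0 < Δ := by linarith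
  have hgt : 1 / (2 * (1 - ε)) < stdPhi (Δ / 2) := by
    rw [← hphikey]
    exact stdPhi_strictMono (by linarith)
  -- notation
  set m := Real.log (1 / c) with hmdef
  have hcm : Real.exp (-m) = c := by
    rw [hmdef, one_div, Real.log_inv, neg_neg, Real.exp_log hc]
  set a := Δ / 2 - m / Δ with hadef
  set b := Δ / 2 + m / Δ with hbdef
  have hea : (Δ - 2 / Δ * Real.log (1 / c)) / 2 = a := by
    rw [hadef, hmdef]; ring
  have heb : (Δ + 2 / Δ * Real.log (1 / c)) / 2 = b := by
    rw [hbdef, hmdef]; ring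
  rw [hea, heb] at hceq ⊢
  have hm0 : 0 < m := by
    refine mpos_of_lt hε1 hΔpos hgt ?_
    rw [hcm, ← hadef, ← hbdef]
    linarith [hceq]
  have hab : a ≤ b := by
    rw [hadef, hbdef]
    have := div_nonneg hm0.le hΔpos.le
    linarith
  have hE : (1 - ε) * (c * stdPhi a + stdPhi b) = 1 := by
    rw [← hceq, mul_one_div, div_self (by linarith : (1:ℝ) - ε ≠ 0)]
  -- the target value
  set K : ℝ := (1 - ε) * ((1 - c) * stdPhi a * m + Δ ^ 2 / 2 * (stdPhi b - stdPhi a)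
    - Δ * (stdphi a - stdphi b)) with hKdef
  have hKalt : (1 - ε) * (m * (stdPhi a + stdPhi b - 1) + Δ ^ 2 / 2 * (stdPhi b - stdPhi a)
      - Δ * (stdphi a - stdphi b)) - ε * m = K := by
    rw [hKdef]; linear_combination m * hE
  show klG ε x (x + Δ) = ENNReal.ofReal K
  -- common instances
  haveI iHst : IsProbabilityMeasure
      (volume.withDensity fun t => ENNReal.ofReal (hdens ε x Δ c b t)) :=
    hdens_prob hε0 hε1 hΔpos hcm hadef hbdef hE
  haveI iH'st : IsProbabilityMeasure
      (volume.withDensity fun t => ENNReal.ofReal (h'dens ε x Δ c a t)) :=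
    h'dens_prob hε0 hε1 hΔpos hcm hadef hbdef hE
  apply le_antisymm
  · -- upper bound : choose the least favorable pair
    refine iInf_le_of_le (volume.withDensity fun t => ENNReal.ofReal (hdens ε x Δ c b t))
      (iInf_le_of_le iHst
        (iInf_le_of_le (volume.withDensity fun t => ENNReal.ofReal (h'dens ε x Δ c a t))
          (iInf_le_of_le iH'st ?_)))
    rw [mix_eq_pdens hε0 hε1 hΔpos hcm hbdef, mix_eq_qdens hε0 hε1 hΔpos hcm hadef]
    set P := volume.withDensity fun t => ENNReal.ofReal (pdens ε x Δ c b t) with hPdef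
    set Q := volume.withDensity fun t => ENNReal.ofReal (qdens ε x Δ c a t) with hQdef
    haveI iP : IsProbabilityMeasure P := by
      rw [hPdef, ← mix_eq_pdens hε0 hε1 hΔpos hcm hbdef]
      exact isProbabilityMeasure_mix hε0.le hε1.le _ _
    haveI iQ : IsProbabilityMeasure Q := by
      rw [hQdef, ← mix_eq_qdens hε0 hε1 hΔpos hcm hadef]
      exact isProbabilityMeasure_mix hε0.le hε1.le _ _
    have hac : P ≪ Q := by
      rw [hPdef, ← qdens_withDensity hm0.le hε1 hΔpos hcm hadef hbdef hab]
      exact withDensity_absolutelyContinuous _ _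
    have hllr := llr_pstar_qstar (ε := ε) (x := x) hm0.le hε1 hΔpos hcm hadef hbdef hab
    have hint : Integrable (llr P Q) P :=
      (integrable_congr hllr).2 (integrable_of_bounded gclamp_continuous (gclamp_abs_le hm0.le))
    have hcond : P ≪ Q ∧ Integrable (fun x => Real.log (P.rnDeriv Q x).toReal) P :=
      ⟨hac, hint⟩
    rw [KLdiv, if_pos hcond]
    apply le_of_eq
    congr 1
    have h1 : ∫ t, Real.log (P.rnDeriv Q t).toReal ∂P = ∫ t, gclamp m x Δ t ∂P :=
      integral_congr_ae hllr
    rw [h1, hPdef, ← mix_eq_pdens hε0 hε1 hΔpos hcm hbdef,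
      integral_mix hε0.le hε1.le _ _ _
        (integrable_of_bounded gclamp_continuous (gclamp_abs_le hm0.le))
        (integrable_of_bounded gclamp_continuous (gclamp_abs_le hm0.le)),
      key1 hm0.le hΔpos hadef hbdef, integral_gclamp_hstar hm0.le hΔpos hbdef]
    linarith [hKalt]
  · -- lower bound
    refine le_iInf fun H => le_iInf fun iH => le_iInf fun H' => le_iInf fun iH' => ?_
    haveI := iH; haveI := iH'
    set P := mix ε (gaussianReal x 1) H with hPdef
    set Q := mix ε (gaussianReal (x + Δ) 1) H' with hQdef
    haveI iP : IsProbabilityMeasure P := isProbabilityMeasure_mix hε0.le hε1.le _ _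
    haveI iQ : IsProbabilityMeasure Q := isProbabilityMeasure_mix hε0.le hε1.le _ _
    by_cases hcond : P ≪ Q ∧ Integrable (fun t => Real.log (P.rnDeriv Q t).toReal) P
    · rw [KLdiv, if_pos hcond]
      apply ENNReal.ofReal_le_ofReal
      have hexpb : ∀ t, |Real.exp (gclamp m x Δ t)| ≤ Real.exp m := by
        intro t
        rw [abs_of_pos (Real.exp_pos _)]
        exact Real.exp_le_exp.2 (abs_le.1 (gclamp_abs_le hm0.le t)).2
      have hexpm : Real.exp m = 1 / c := by
        rw [← hcm, Real.exp_neg, one_div, inv_inv]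
      have hQ1 : ∫ t, Real.exp (gclamp m x Δ t) ∂Q ≤ 1 := by
        rw [hQdef, integral_mix hε0.le hε1.le _ _ _
          (integrable_of_bounded gclamp_continuous.rexp hexpb)
          (integrable_of_bounded gclamp_continuous.rexp hexpb),
          key2 hm0.le hΔpos hcm hadef hbdef]
        have hH'le : ∫ t, Real.exp (gclamp m x Δ t) ∂H' ≤ 1 / c := by
          calc ∫ t, Real.exp (gclamp m x Δ t) ∂H'
              ≤ ∫ _, (1 / c) ∂H' := by
                refine integral_mono (integrable_of_bounded gclamp_continuous.rexp hexpb)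
                  (integrable_const _) fun t => ?_
                rw [← hexpm]
                exact Real.exp_le_exp.2 (abs_le.1 (gclamp_abs_le hm0.le t)).2
            _ = 1 / c := by rw [integral_const, probReal_univ]; simp
        have halg : (1 - ε) * ((1 / c) * (1 - stdPhi b) + (stdPhi b - stdPhi a) + c * stdPhi a)
            + ε * (1 / c) = 1 := by
          field_simp
          linear_combination (c - 1) * hE
        nlinarith [hH'le]
      have hge := llr_integral_ge P Q hcond.1 hcond.2 gclamp_continuous
        (gclamp_abs_le hm0.le) hQ1
      have hPg : K ≤ ∫ t, gclamp m x Δ t ∂P := by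
        rw [hPdef, integral_mix hε0.le hε1.le _ _ _
          (integrable_of_bounded gclamp_continuous (gclamp_abs_le hm0.le))
          (integrable_of_bounded gclamp_continuous (gclamp_abs_le hm0.le)),
          key1 hm0.le hΔpos hadef hbdef]
        have hHge : -m ≤ ∫ t, gclamp m x Δ t ∂H := by
          calc (-m : ℝ) = ∫ _, (-m) ∂H := by rw [integral_const, probReal_univ]; simp
            _ ≤ ∫ t, gclamp m x Δ t ∂H := by
                refine integral_mono (integrable_const _)
                  (integrable_of_bounded gclamp_continuous (gclamp_abs_le hm0.le)) fun t => ?_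
                exact (abs_le.1 (gclamp_abs_le hm0.le t)).1
        nlinarith [hHge, hKalt]
      have : ∫ t, llr P Q t ∂P = ∫ t, Real.log (P.rnDeriv Q t).toReal ∂P := rfl
      linarith [hge, this]
    · rw [KLdiv, if_neg hcond]
      exact le_top
end final
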